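/- (Soundness) Every deducible sequent is valid: if A ⊢ s, then every interpretation that satisfies every formula in A satisfies s. -/

import Mathlib

namespace PTT


/-- Simple types over a single base type `B`. -/
inductive Ty : Type
  | base : Ty
  | arrow : Ty → Ty → Ty
deriving DecidableEq

/-- Names: the constants `⊥` and `→`, and variables (an index together with a type). -/
inductive Name : Type
  | bot : Name
  | imp : Name
  | var : ℕ → Ty → Name
deriving DecidableEq

/-- The type of a name. -/
def Name.ty : Name → Ty
  | .bot => .base
  | .imp => .arrow .base (.arrow .base .base)
  | .var _ σ => σ

/-- Terms: names, abstraction over a variable, application. -/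
inductive Tm : Type
  | name : Name → Tm
  | lam : ℕ → Ty → Tm → Tm
  | app : Tm → Tm → Tm
deriving DecidableEq

/-- The term `⊥`. -/
def botTm : Tm := .name .bot

/-- The variable `(n, σ)` as a term. -/
def vr (n : ℕ) (σ : Ty) : Tm := .name (.var n σ)

/-- Implication `s → t`. -/
def impTm (s t : Tm) : Tm := .app (.app (.name .imp) s) t

/-- `⊤ := ⊥ → ⊥`. -/
def topTm : Tm := impTm botTm botTm

/-- `¬ s := s → ⊥`. -/
def negTm (s : Tm) : Tm := impTm s botTm

/-- `s ∨ t := (s → t) → t`. -/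
def orTm (s t : Tm) : Tm := impTm (impTm s t) t

/-- `s ∧ t := ¬(¬s ∨ ¬t)`. -/
def andTm (s t : Tm) : Tm := negTm (orTm (negTm s) (negTm t))

/-- `s ≡ t := (s → t) ∧ (t → s)`. -/
def equivTm (s t : Tm) : Tm := andTm (impTm s t) (impTm t s)

/-- The typing relation. -/
inductive HasTy : Tm → Ty → Prop
  | name (x : Name) : HasTy (.name x) x.ty
  | lam {n σ s τ} : HasTy s τ → HasTy (.lam n σ s) (.arrow σ τ)
  | app {s t σ τ} : HasTy s (.arrow σ τ) → HasTy t σ → HasTy (.app s t) τ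

/-- Free variables of a term. -/
def fv : Tm → Finset (ℕ × Ty)
  | .name (.var n σ) => {(n, σ)}
  | .name _ => ∅
  | .lam n σ s => (fv s).erase (n, σ)
  | .app s t => fv s ∪ fv t

/-- A term is closed if it has no free variables. -/
def Closed (s : Tm) : Prop := fv s = ∅

/-- Capture-free parallel substitution (bound variables are renamed). -/
def substAux (ρ : ℕ × Ty → Tm) : Tm → Tm
  | .name (.var n σ) => ρ (n, σ)
  | .name x => .name x
  | .app s t => .app (substAux ρ s) (substAux ρ t)
  | .lam n σ s =>
      let used : Finset ℕ :=
        ((fv s).erase (n, σ)).biUnion (fun p => (fv (ρ p)).image Prod.fst)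
      let m : ℕ := used.sup id + 1
      .lam m σ (substAux (Function.update ρ (n, σ) (vr m σ)) s)

/-- Capture-free substitution `s[(n,σ) := t]`. -/
def subst (s : Tm) (n : ℕ) (σ : Ty) (t : Tm) : Tm :=
  substAux (Function.update (fun p => vr p.1 p.2) (n, σ) t) s

/-- Contexts: terms with exactly one hole (possibly under binders). -/
inductive Ctx : Type
  | hole : Ctx
  | lam : ℕ → Ty → Ctx → Ctx
  | appL : Ctx → Tm → Ctx
  | appR : Tm → Ctx → Ctx

/-- Filling the hole of a context with a term (capturing is allowed). -/
def Ctx.fill : Ctx → Tm → Tm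
  | .hole, s => s
  | .lam n σ C, s => .lam n σ (C.fill s)
  | .appL C t, s => .app (C.fill s) t
  | .appR t C, s => .app t (C.fill s)

/-- `C` captures the variable `p` if the hole of `C` lies below a binder for `p`. -/
def Ctx.captures : Ctx → ℕ × Ty → Prop
  | .hole, _ => False
  | .lam n σ C, p => p = (n, σ) ∨ C.captures p
  | .appL C _, p => C.captures p
  | .appR _ C, p => C.captures p

/-- `C` is admissible for `A` if it captures no variable free in `A`. -/
def Ctx.Admissible (C : Ctx) (A : Finset Tm) : Prop :=
  ∀ p ∈ A.biUnion fv, ¬ C.captures p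

/-- `s` is a subterm of `t`. -/
def Subterm (s t : Tm) : Prop := ∃ C : Ctx, C.fill s = t

/-- β-redexes. -/
def IsBetaRedex : Tm → Prop
  | .app (.lam _ _ _) _ => True
  | _ => False

/-- A term is β-normal if none of its subterms is a β-redex. -/
def BetaNormal (t : Tm) : Prop := ∀ s, Subterm s t → ¬ IsBetaRedex s

/-- Lambda equivalence: the least equivalence on well-typed terms containing
α-, β-, η-conversion and closed under arbitrary contexts. -/
inductive LamEq : Tm → Tm → Prop
  | refl {s σ} : HasTy s σ → LamEq s s
  | symm {s t} : LamEq s t → LamEq t s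
  | trans {s t u} : LamEq s t → LamEq t u → LamEq s u
  | alpha {n m σ s τ} : HasTy (.lam n σ s) τ → (m, σ) ∉ fv s →
      LamEq (.lam n σ s) (.lam m σ (subst s n σ (vr m σ)))
  | beta {n σ s t τ} : HasTy (.app (.lam n σ s) t) τ →
      LamEq (.app (.lam n σ s) t) (subst s n σ t)
  | eta {n σ s τ} : HasTy (.lam n σ (.app s (vr n σ))) τ → (n, σ) ∉ fv s →
      LamEq (.lam n σ (.app s (vr n σ))) s
  | ctx {s t σ} (C : Ctx) : LamEq s t → HasTy (C.fill s) σ → LamEq (C.fill s) (C.fill t)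

/-- The standard set-theoretic interpretation of types: `B` is interpreted as the
two truth values (`Bool`), functional types as full function spaces. -/
def Ty.sem : Ty → Type
  | .base => Bool
  | .arrow σ τ => σ.sem → τ.sem

def Ty.semDefault : (σ : Ty) → σ.sem
  | .base => false
  | .arrow _ τ => fun _ => τ.semDefault

instance (σ : Ty) : Inhabited σ.sem := ⟨σ.semDefault⟩

noncomputable instance Ty.semFintype : (σ : Ty) → Fintype σ.sem
  | .base => inferInstanceAs (Fintype Bool)
  | .arrow σ τ =>
      letI := Ty.semFintype σ
      letI := Ty.semFintype τ
      letI := Classical.decEq σ.sem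
      inferInstanceAs (Fintype (σ.sem → τ.sem))

def Ty.semCast {σ τ : Ty} (h : σ = τ) (v : σ.sem) : τ.sem := h ▸ v

/-- An interpretation assigns to every variable a value of the corresponding type
(the constants `⊥` and `→` have their values fixed). -/
def Interp : Type := ℕ → (σ : Ty) → σ.sem

def Interp.update (I : Interp) (n : ℕ) (σ : Ty) (v : σ.sem) : Interp :=
  fun m τ => if h : m = n ∧ τ = σ then Ty.semCast h.2.symm v else I m τ

/-- Type inference. -/
def typeOf : Tm → Option Ty
  | .name x => some x.ty
  | .lam _ σ s => (typeOf s).map (Ty.arrow σ)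
  | .app s t =>
      match typeOf s, typeOf t with
      | some (.arrow σ τ), some σ' => if σ = σ' then some τ else none
      | _, _ => none

/-- The canonical extension `Î` of an interpretation to all terms: `eval I s σ`
is the value of `s` at type `σ` (on well-typed terms this is the usual
denotation; junk default values are used at type mismatches). -/
def eval (I : Interp) : Tm → (σ : Ty) → σ.sem
  | .name (.var n τ), σ => if h : τ = σ then Ty.semCast h (I n τ) else default
  | .name .bot, σ =>
      match σ with
      | .base => false
      | _ => default
  | .name .imp, σ =>
      match σ with
      | .arrow .base (.arrow .base .base) => fun a b => !a || b
      | _ => default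
  | .app s t, σ =>
      match typeOf t with
      | some τ => eval I s (.arrow τ σ) (eval I t τ)
      | none => default
  | .lam n τ s, σ =>
      match σ with
      | .base => default
      | .arrow σ₁ σ₂ =>
          if h : σ₁ = τ then
            fun a => eval (I.update n τ (Ty.semCast h a)) s σ₂
          else default

/-- `I` satisfies the formula `s` if `Î s = 1`. -/
def Satisfies (I : Interp) (s : Tm) : Prop := eval I s .base = true

/-- A formula is valid if every interpretation satisfies it. -/
def ValidFml (s : Tm) : Prop := ∀ I : Interp, Satisfies I s

/-- A sequent `A ⇒ s` is valid if every interpretation satisfying `A` satisfies `s`. -/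
def ValidSeq (A : Finset Tm) (s : Tm) : Prop :=
  ∀ I : Interp, (∀ t ∈ A, Satisfies I t) → Satisfies I s

/-- Finite disjunction (the empty disjunction is `⊥`). -/
def orList : List Tm → Tm
  | [] => botTm
  | [s] => s
  | s :: l => orTm s (orList l)

/-- Finite conjunction (the empty conjunction is `⊤`). -/
def andList : List Tm → Tm
  | [] => topTm
  | [s] => s
  | s :: l => andTm s (andList l)

/-- The argument types of a type (every type has the form `σ₁…σₙB`). -/
def Ty.args : Ty → List Ty
  | .base => []
  | .arrow σ τ => σ :: τ.args

/-- Tuples of values along a list of types. -/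
def Tup : List Ty → Type
  | [] => PUnit
  | σ :: l => σ.sem × Tup l

noncomputable instance TupFintype : (l : List Ty) → Fintype (Tup l)
  | [] => inferInstanceAs (Fintype PUnit)
  | σ :: l =>
      letI := TupFintype l
      inferInstanceAs (Fintype (σ.sem × Tup l))

/-- Applying a function value to a tuple of arguments (the result type is `B`). -/
def Ty.applyTup : (σ : Ty) → σ.sem → Tup σ.args → Bool
  | .base, a, _ => a
  | .arrow _ τ, f, p => τ.applyTup (f p.1) p.2

/-- Quote/identity data for each type in a list: a quote function and the term `≐`. -/
def ArgData : List Ty → Type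
  | [] => PUnit
  | σ :: l => ((σ.sem → Tm) × Tm) × ArgData l

/-- The conjunction list `x_k ≐_{σ_k} (↓_{σ_k} b_k), …` for a tuple `b`. -/
def eqConj : (l : List Ty) → ArgData l → ℕ → Tup l → List Tm
  | [], _, _, _ => []
  | σ :: l, (d, ds), k, (b, bs) =>
      (.app (.app d.2 (vr k σ)) (d.1 b)) :: eqConj l ds (k + 1) bs

/-- `λ x_k : σ_k. …` binding one variable for each type in the list. -/
def mkLams : (l : List Ty) → ℕ → Tm → Tm
  | [], _, body => body
  | σ :: l, k, body => .lam k σ (mkLams l (k + 1) body)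

/-- The body of the quote term
`↓_{σ₁…σₙB} a := λx₁…xₙ. ⋁_{b₁…bₙ, a b₁…bₙ = 1} ⋀_j x_j ≐_{σ_j} (↓_{σ_j} b_j)`. -/
noncomputable def quoteBodyAux (σ : Ty) (ad : ArgData σ.args) (a : σ.sem) : Tm :=
  mkLams σ.args 0 (orList
    ((((Finset.univ : Finset (Tup σ.args)).toList.filter
        (fun b => σ.applyTup a b))).map
      (fun b => andList (eqConj σ.args ad 0 b))))

/-- `∀σ := λf. ⋀_{a ∈ Bσ} f (↓σ a)`, given the quote function for `σ`. -/
noncomputable def allTmAux (σ : Ty) (q : σ.sem → Tm) : Tm :=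
  .lam 0 (.arrow σ .base)
    (andList (((Finset.univ : Finset σ.sem).toList).map
      (fun a => .app (vr 0 (.arrow σ .base)) (q a))))

mutual
  /-- The quote function `↓σ` together with the identity term `≐σ`. -/
  noncomputable def quoteEq : (σ : Ty) → ((σ.sem → Tm) × Tm)
    | .base =>
        (fun a => quoteBodyAux .base PUnit.unit a,
         .lam 0 .base (.lam 1 .base (equivTm (vr 0 .base) (vr 1 .base))))
    | .arrow σ τ =>
        (fun a => quoteBodyAux (.arrow σ τ) ((quoteEq σ, argData τ) : ArgData (σ :: τ.args)) a,
         .lam 0 (.arrow σ τ) (.lam 1 (.arrow σ τ)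
           (.app (allTmAux σ (quoteEq σ).1)
             (.lam 2 σ
               (.app (.app (quoteEq τ).2
                  (.app (vr 0 (.arrow σ τ)) (vr 2 σ)))
                (.app (vr 1 (.arrow σ τ)) (vr 2 σ)))))))
  /-- Quote/identity data for all argument types of a type. -/
  noncomputable def argData : (σ : Ty) → ArgData σ.args
    | .base => PUnit.unit
    | .arrow σ τ => ((quoteEq σ, argData τ) : ArgData (σ :: τ.args))
end

/-- The quote function `↓σ : Bσ → Λ`. -/
noncomputable def quote (σ : Ty) (a : σ.sem) : Tm := (quoteEq σ).1 a

/-- The term `≐σ : σσB` denoting the identity predicate on `Bσ`. -/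
noncomputable def eqTm (σ : Ty) : Tm := (quoteEq σ).2

/-- The term `∀σ : (σB)B`. -/
noncomputable def allTm (σ : Ty) : Tm := allTmAux σ (quote σ)


/-- Propositional formulas: `s ::= x | ⊥ | s → s` with `x` a variable of type `B`. -/
inductive Propositional : Tm → Prop
  | var (n : ℕ) : Propositional (vr n .base)
  | bot : Propositional botTm
  | imp {s t} : Propositional s → Propositional t → Propositional (impTm s t)

/-- A type-respecting substitution of terms for variables. -/
def IsSubstitution (ρ : ℕ × Ty → Tm) : Prop := ∀ n σ, HasTy (ρ (n, σ)) σ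

/-- A formula is tautologous if it is a substitution instance of a tautology
(a valid propositional formula). -/
def Tautologous (s : Tm) : Prop :=
  ∃ t ρ, Propositional t ∧ ValidFml t ∧ IsSubstitution ρ ∧ s = substAux ρ t

/-- The proof system: Triv, Weak, Ded, MP, DN, Lam and Boolean replacement (BR).
Sequents consist of a finite set of formulas and a formula. -/
inductive Ded : Finset Tm → Tm → Prop
  | triv {A s} : (∀ t ∈ A, HasTy t .base) → HasTy s .base → Ded (insert s A) s
  | weak {A s t} : HasTy s .base → Ded A t → Ded (insert s A) t
  | ded {A s t} : Ded (insert s A) t → Ded A (impTm s t)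
  | mp {A s t} : Ded A (impTm s t) → Ded A s → Ded A t
  | dn {A s} : Ded A (negTm (negTm s)) → Ded A s
  | lam {A s t} : Ded A s → LamEq s t → HasTy t .base → Ded A t
  | br {A s t} (C : Ctx) : C.Admissible A → Ded A (equivTm s t) →
      Ded A (C.fill s) → HasTy (C.fill t) .base → Ded A (C.fill t)

/-!
Every rule preserves validity. Two rules need work. For Lam, λ-equivalent terms have the same
type and the same value under every interpretation; the β- and α-cases rest on the
substitution lemma `Î (s[ρ]) = Ĵ s` with `J p = Î (ρ p)`, which holds because `substAux`
renames each binder to a variable free in no `ρ p`. For BR, since `C` captures no variable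
free in `A`, every interpretation reached while evaluating below the binders of `C` still
satisfies `A`, hence identifies `s` and `t`.
-/

lemma Interp.update_self (I : Interp) (n : ℕ) (σ : Ty) (v : σ.sem) : I.update n σ v n σ = v := by
  rw [Interp.update, dif_pos ⟨rfl, rfl⟩]
  rfl

lemma Interp.update_of_ne (I : Interp) {n : ℕ} {σ : Ty} (v : σ.sem) {p : ℕ × Ty}
    (hp : p ≠ (n, σ)) : I.update n σ v p.1 p.2 = I p.1 p.2 := by
  rw [Interp.update, dif_neg fun h => hp (Prod.ext h.1 h.2)]

lemma eval_name_var (I : Interp) (n : ℕ) (τ σ : Ty) :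
    eval I (.name (.var n τ)) σ = if h : τ = σ then Ty.semCast h (I n τ) else default := rfl

lemma eval_vr (I : Interp) (n : ℕ) (σ : Ty) : eval I (vr n σ) σ = I n σ := by
  rw [vr, eval_name_var, dif_pos rfl]
  rfl

lemma eval_app (I : Interp) (s t : Tm) (σ : Ty) :
    eval I (.app s t) σ = (typeOf t).elim default fun τ => eval I s (.arrow τ σ) (eval I t τ) := by
  show (match typeOf t with
    | some τ => eval I s (.arrow τ σ) (eval I t τ)
    | none => default) = _
  cases typeOf t <;> rfl

lemma eval_lam (I : Interp) (n : ℕ) (τ : Ty) (s : Tm) (σ₁ σ₂ : Ty) :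
    eval I (.lam n τ s) (.arrow σ₁ σ₂) =
      if h : σ₁ = τ then fun a => eval (I.update n τ (Ty.semCast h a)) s σ₂ else default := rfl

lemma eval_lam_arrow (I : Interp) (n : ℕ) (τ : Ty) (s : Tm) (σ : Ty) :
    eval I (.lam n τ s) (.arrow τ σ) = fun a => eval (I.update n τ a) s σ := by
  rw [eval_lam, dif_pos rfl]
  rfl

lemma eval_lam_of_ne (I : Interp) (n : ℕ) {τ σ₁ : Ty} (s : Tm) (σ₂ : Ty) (h : σ₁ ≠ τ) :
    eval I (.lam n τ s) (.arrow σ₁ σ₂) = default := by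
  rw [eval_lam, dif_neg h]
  rfl

lemma eval_lam_congr {I J : Interp} {n m : ℕ} {τ : Ty} {s t : Tm}
    (h : ∀ a σ, eval (I.update n τ a) s σ = eval (J.update m τ a) t σ) (σ : Ty) :
    eval I (.lam n τ s) σ = eval J (.lam m τ t) σ := by
  rcases σ with _ | ⟨σ₁, σ₂⟩
  · rfl
  by_cases hσ : σ₁ = τ
  · subst hσ
    rw [eval_lam_arrow, eval_lam_arrow]
    exact funext fun a => h a σ₂
  · rw [eval_lam_of_ne _ _ _ _ hσ, eval_lam_of_ne _ _ _ _ hσ]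

lemma eval_app_congr {I J : Interp} {s s' t t' : Tm} (hty : typeOf t = typeOf t')
    (hs : ∀ σ, eval I s σ = eval J s' σ) (ht : ∀ σ, eval I t σ = eval J t' σ) (σ : Ty) :
    eval I (.app s t) σ = eval J (.app s' t') σ := by
  simp only [eval_app, hty, hs, ht]

lemma HasTy.typeOf_eq {s : Tm} {σ : Ty} (h : HasTy s σ) : typeOf s = some σ := by
  induction h with
  | name x => rfl
  | lam _ ih => simp [typeOf, ih]
  | app _ _ ihs iht => simp [typeOf, ihs, iht]

lemma hasTy_vr (n : ℕ) (σ : Ty) : HasTy (vr n σ) σ := HasTy.name (.var n σ)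

lemma HasTy.eval_of_ne {s : Tm} {τ : Ty} (h : HasTy s τ) (I : Interp) {σ : Ty} (hσ : σ ≠ τ) :
    eval I s σ = default := by
  induction h generalizing I σ with
  | name x =>
    rcases x with _ | _ | ⟨n, τ⟩
    · cases σ
      · exact absurd rfl hσ
      · rfl
    · rcases σ with _ | ⟨_ | _, _ | ⟨_ | _, _ | _⟩⟩ <;> first | rfl | exact absurd rfl hσ
    · exact dif_neg (Ne.symm hσ)
  | app _ ht ihs _ =>
    rw [eval_app, ht.typeOf_eq, Option.elim_some, ihs I fun h => hσ (Ty.arrow.inj h).2]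
    rfl
  | @lam n τ s τ' _ ih =>
    rcases σ with _ | ⟨σ₁, σ₂⟩
    · rfl
    by_cases h₁ : σ₁ = τ
    · subst h₁
      rw [eval_lam_arrow]
      exact funext fun a => ih _ fun h => hσ (h ▸ rfl)
    · exact eval_lam_of_ne _ _ _ _ h₁

lemma eval_congr_fv (s : Tm) {I J : Interp} (h : ∀ p ∈ fv s, I p.1 p.2 = J p.1 p.2) (σ : Ty) :
    eval I s σ = eval J s σ := by
  induction s generalizing I J σ with
  | name x =>
    rcases x with _ | _ | ⟨n, τ⟩
    · rfl
    · rfl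
    · simp only [eval_name_var, h (n, τ) (Finset.mem_singleton_self _)]
  | app s t ihs iht =>
    exact eval_app_congr rfl (ihs fun p hp => h p (Finset.mem_union_left _ hp))
      (iht fun p hp => h p (Finset.mem_union_right _ hp)) σ
  | lam n τ s ih =>
    refine eval_lam_congr (fun a σ => ih (fun p hp => ?_) σ) σ
    by_cases hpn : p = (n, τ)
    · subst hpn
      rw [Interp.update_self, Interp.update_self]
    · rw [Interp.update_of_ne _ _ hpn, Interp.update_of_ne _ _ hpn]
      exact h p (Finset.mem_erase.2 ⟨hpn, hp⟩)

lemma eval_update_of_notMem_fv {s : Tm} {n : ℕ} {τ : Ty} (h : (n, τ) ∉ fv s) (I : Interp)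
    (a : τ.sem) (σ : Ty) : eval (I.update n τ a) s σ = eval I s σ :=
  eval_congr_fv s (fun _ hp => Interp.update_of_ne _ _ fun he => h (he ▸ hp)) σ

def Interp.subst (I : Interp) (ρ : ℕ × Ty → Tm) : Interp := fun n τ => eval I (ρ (n, τ)) τ

lemma IsSubstitution.update {ρ : ℕ × Ty → Tm} (hρ : IsSubstitution ρ) {t : Tm} {σ : Ty}
    (ht : HasTy t σ) (n : ℕ) : IsSubstitution (Function.update ρ (n, σ) t) := by
  intro k τ
  by_cases he : (k, τ) = (n, σ)
  · obtain ⟨rfl, rfl⟩ := Prod.ext_iff.1 he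
    rwa [Function.update_self]
  · rw [Function.update_of_ne he]
    exact hρ k τ

lemma isSubstitution_vr : IsSubstitution fun p => vr p.1 p.2 := fun n σ => hasTy_vr n σ

lemma typeOf_substAux {ρ : ℕ × Ty → Tm} (hρ : IsSubstitution ρ) (s : Tm) :
    typeOf (substAux ρ s) = typeOf s := by
  induction s generalizing ρ with
  | name x =>
    rcases x with _ | _ | ⟨n, τ⟩
    · rfl
    · rfl
    · exact (hρ n τ).typeOf_eq
  | app s t ihs iht => simp only [substAux, typeOf, ihs hρ, iht hρ]
  | lam n σ s ih => simp only [substAux, typeOf, ih (hρ.update (hasTy_vr _ σ) n)]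

-- The index on the left is the fresh binder chosen by `substAux`.
lemma fresh_notMem_fv {ρ : ℕ × Ty → Tm} {F : Finset (ℕ × Ty)} {p : ℕ × Ty} (hp : p ∈ F) (τ : Ty) :
    ((F.biUnion fun q => (fv (ρ q)).image Prod.fst).sup id + 1, τ) ∉ fv (ρ p) := by
  intro hmem
  have hmem' : _ ∈ F.biUnion fun q => (fv (ρ q)).image Prod.fst :=
    Finset.mem_biUnion.2 ⟨p, hp, Finset.mem_image_of_mem Prod.fst hmem⟩
  exact Nat.not_succ_le_self _ (Finset.le_sup (f := id) hmem')

lemma eval_substAux {ρ : ℕ × Ty → Tm} (hρ : IsSubstitution ρ) (s : Tm) (I : Interp) (σ : Ty) :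
    eval I (substAux ρ s) σ = eval (I.subst ρ) s σ := by
  induction s generalizing ρ I σ with
  | name x =>
    rcases x with _ | _ | ⟨n, τ⟩
    · rfl
    · rfl
    · by_cases hτ : τ = σ
      · subst hτ
        show eval I (ρ (n, τ)) τ = eval (I.subst ρ) (vr n τ) τ
        rw [eval_vr]
        rfl
      · rw [eval_name_var, dif_neg hτ]
        exact (hρ n τ).eval_of_ne I (Ne.symm hτ)
  | app s t ihs iht =>
    simp only [substAux, eval_app, typeOf_substAux hρ, ihs hρ, iht hρ]
  | lam n τ s ih =>
    simp only [substAux]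
    refine eval_lam_congr (fun a σ => ?_) σ
    rw [ih (hρ.update (hasTy_vr _ τ) n)]
    refine eval_congr_fv s (fun p hp => ?_) σ
    by_cases hpn : p = (n, τ)
    · subst hpn
      rw [Interp.update_self, Interp.subst, Function.update_self, eval_vr, Interp.update_self]
    · rw [Interp.update_of_ne _ _ hpn, Interp.subst, Function.update_of_ne hpn,
        eval_update_of_notMem_fv (fresh_notMem_fv (Finset.mem_erase.2 ⟨hpn, hp⟩) τ)]
      rfl

lemma Interp.subst_update_vr (I : Interp) (n : ℕ) (σ : Ty) (t : Tm) :
    I.subst (Function.update (fun p => vr p.1 p.2) (n, σ) t) = I.update n σ (eval I t σ) := by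
  funext m τ
  by_cases he : (m, τ) = (n, σ)
  · obtain ⟨rfl, rfl⟩ := Prod.ext_iff.1 he
    rw [Interp.subst, Function.update_self, Interp.update_self]
  · rw [Interp.subst, Function.update_of_ne he, eval_vr]
    exact (Interp.update_of_ne I _ he).symm

lemma eval_subst {t : Tm} {σ : Ty} (ht : HasTy t σ) (s : Tm) (n : ℕ) (I : Interp) (τ : Ty) :
    eval I (subst s n σ t) τ = eval (I.update n σ (eval I t σ)) s τ := by
  rw [subst, eval_substAux (isSubstitution_vr.update ht n), Interp.subst_update_vr]

lemma Ctx.typeOf_fill (C : Ctx) {s t : Tm} (h : typeOf s = typeOf t) :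
    typeOf (C.fill s) = typeOf (C.fill t) := by
  induction C with
  | hole => exact h
  | lam _ _ _ ih | appL _ _ ih | appR _ _ ih => simp only [Ctx.fill, typeOf, ih]

lemma Ctx.eval_fill_eq (C : Ctx) {s t : Tm} (hty : typeOf s = typeOf t) {I : Interp}
    (h : ∀ J : Interp, (∀ p, ¬ C.captures p → J p.1 p.2 = I p.1 p.2) →
      ∀ σ, eval J s σ = eval J t σ) (σ : Ty) :
    eval I (C.fill s) σ = eval I (C.fill t) σ := by
  induction C generalizing I σ with
  | hole => exact h I (fun _ _ => rfl) σ
  | lam n τ C ih =>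
    refine eval_lam_congr (fun a σ => ih (fun J hJ => h J fun p hp => ?_) σ) σ
    have hpn : p ≠ (n, τ) := fun he => hp (Or.inl he)
    rw [hJ p fun hc => hp (Or.inr hc), Interp.update_of_ne _ _ hpn]
  | appL C u ih => exact eval_app_congr rfl (ih h) (fun _ => rfl) σ
  | appR u C ih => exact eval_app_congr (C.typeOf_fill hty) (fun _ => rfl) (ih h) σ

lemma LamEq.typeOf_eq {s t : Tm} (h : LamEq s t) : typeOf s = typeOf t := by
  induction h with
  | refl _ => rfl
  | symm _ ih => exact ih.symm
  | trans _ _ ih₁ ih₂ => exact ih₁.trans ih₂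
  | alpha _ _ =>
    simp only [typeOf, subst, typeOf_substAux (isSubstitution_vr.update (hasTy_vr _ _) _)]
  | beta hty =>
    rw [hty.typeOf_eq]
    rcases hty with _ | _ | ⟨hlam, ht⟩
    rcases hlam with _ | ⟨hs⟩
    rw [subst, typeOf_substAux (isSubstitution_vr.update ht _), hs.typeOf_eq]
  | eta hty _ =>
    rw [hty.typeOf_eq]
    rcases hty with _ | ⟨happ⟩
    rcases happ with _ | _ | ⟨hs, ⟨⟩⟩
    exact hs.typeOf_eq.symm
  | ctx C _ _ ih => exact C.typeOf_fill ih

lemma eval_alpha {n m : ℕ} {σ : Ty} {s : Tm} (hm : (m, σ) ∉ fv s) (I : Interp)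
    (τ : Ty) : eval I (.lam n σ s) τ = eval I (.lam m σ (subst s n σ (vr m σ))) τ := by
  refine eval_lam_congr (fun a τ => ?_) τ
  rw [eval_subst (hasTy_vr m σ), eval_vr, Interp.update_self]
  refine eval_congr_fv s (fun p hp => ?_) τ
  by_cases hpn : p = (n, σ)
  · subst hpn
    rw [Interp.update_self, Interp.update_self]
  · rw [Interp.update_of_ne _ _ hpn, Interp.update_of_ne _ _ hpn,
      Interp.update_of_ne _ _ fun he => hm (he ▸ hp)]

lemma eval_beta {n : ℕ} {σ : Ty} {t : Tm} (ht : HasTy t σ) (s : Tm) (I : Interp) (τ : Ty) :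
    eval I (.app (.lam n σ s) t) τ = eval I (subst s n σ t) τ := by
  rw [eval_app, ht.typeOf_eq, Option.elim_some, eval_lam_arrow, eval_subst ht]

lemma eval_eta {n : ℕ} {σ τ : Ty} {s : Tm} (hs : HasTy s (.arrow σ τ)) (hn : (n, σ) ∉ fv s)
    (I : Interp) (ς : Ty) : eval I (.lam n σ (.app s (vr n σ))) ς = eval I s ς := by
  rcases ς with _ | ⟨ς₁, ς₂⟩
  · exact (hs.eval_of_ne I Ty.noConfusion).symm
  by_cases hς : ς₁ = σ
  · subst hς
    rw [eval_lam_arrow]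
    funext a
    rw [eval_app, (hasTy_vr n ς₁).typeOf_eq, Option.elim_some, eval_vr, Interp.update_self,
      eval_update_of_notMem_fv hn]
  · rw [eval_lam_of_ne _ _ _ _ hς, hs.eval_of_ne I fun he => hς (Ty.arrow.inj he).1]

lemma LamEq.eval_eq {s t : Tm} (h : LamEq s t) (I : Interp) (σ : Ty) :
    eval I s σ = eval I t σ := by
  induction h generalizing I σ with
  | refl _ => rfl
  | symm _ ih => exact (ih I σ).symm
  | trans _ _ ih₁ ih₂ => exact (ih₁ I σ).trans (ih₂ I σ)
  | alpha _ hm => exact eval_alpha hm I σ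
  | beta hty =>
    rcases hty with _ | _ | ⟨⟨_⟩, ht⟩
    exact eval_beta ht _ I σ
  | eta hty hn =>
    rcases hty with _ | ⟨happ⟩
    rcases happ with _ | _ | ⟨hs, ⟨⟩⟩
    exact eval_eta hs hn I σ
  | ctx C hst _ ih => exact C.eval_fill_eq hst.typeOf_eq (fun J _ => ih J) σ

lemma hasTy_botTm : HasTy botTm .base := HasTy.name .bot

lemma hasTy_impTm_iff {s t : Tm} :
    HasTy (impTm s t) .base ↔ HasTy s .base ∧ HasTy t .base := by
  refine ⟨fun h => ?_, fun ⟨hs, ht⟩ => .app (.app (.name .imp) hs) ht⟩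
  rcases h with _ | _ | ⟨_ | _ | ⟨⟨⟩, hs⟩, ht⟩
  exact ⟨hs, ht⟩

lemma hasTy_equivTm_iff {s t : Tm} :
    HasTy (equivTm s t) .base ↔ HasTy s .base ∧ HasTy t .base := by
  simp only [equivTm, andTm, orTm, negTm, hasTy_impTm_iff, hasTy_botTm]
  tauto

lemma satisfies_impTm {s t : Tm} (hs : HasTy s .base) (ht : HasTy t .base) {I : Interp} :
    Satisfies I (impTm s t) ↔ (Satisfies I s → Satisfies I t) := by
  have hval : eval I (impTm s t) .base = (!eval I s .base || eval I t .base) := by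
    rw [impTm, eval_app, ht.typeOf_eq, Option.elim_some, eval_app, hs.typeOf_eq, Option.elim_some]
    rfl
  have hbool : ∀ a b : Bool, (!a || b) = true ↔ (a = true → b = true) := by decide
  unfold Satisfies
  rw [hval]
  exact hbool _ _

lemma not_satisfies_botTm (I : Interp) : ¬ Satisfies I botTm := Bool.false_ne_true

lemma satisfies_negTm {s : Tm} (hs : HasTy s .base) {I : Interp} :
    Satisfies I (negTm s) ↔ ¬ Satisfies I s := by
  rw [negTm, satisfies_impTm hs hasTy_botTm]
  exact ⟨fun h hs => not_satisfies_botTm I (h hs), fun h hs => absurd hs h⟩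

lemma satisfies_equivTm {s t : Tm} (hs : HasTy s .base) (ht : HasTy t .base) {I : Interp} :
    Satisfies I (equivTm s t) ↔ (Satisfies I s ↔ Satisfies I t) := by
  simp (disch := simp only [hasTy_impTm_iff, hs, ht, hasTy_botTm, and_self]) only
    [equivTm, andTm, orTm, negTm, satisfies_impTm]
  have := not_satisfies_botTm I
  tauto

lemma Ded.hasTy {A : Finset Tm} {s : Tm} (h : Ded A s) :
    (∀ t ∈ A, HasTy t .base) ∧ HasTy s .base := by
  induction h with
  | triv hA hs => exact ⟨(Finset.forall_mem_insert _ _ _).2 ⟨hs, hA⟩, hs⟩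
  | weak hs _ ih => exact ⟨(Finset.forall_mem_insert _ _ _).2 ⟨hs, ih.1⟩, ih.2⟩
  | ded _ ih =>
    obtain ⟨hs, hA⟩ := (Finset.forall_mem_insert _ _ _).1 ih.1
    exact ⟨hA, hasTy_impTm_iff.2 ⟨hs, ih.2⟩⟩
  | mp _ _ ih _ => exact ⟨ih.1, (hasTy_impTm_iff.1 ih.2).2⟩
  | dn _ ih => exact ⟨ih.1, (hasTy_impTm_iff.1 (hasTy_impTm_iff.1 ih.2).1).1⟩
  | lam _ _ ht ih | br _ _ _ _ ht ih _ => exact ⟨ih.1, ht⟩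

lemma ValidSeq.br {A : Finset Tm} {s t : Tm} {C : Ctx} (hC : C.Admissible A)
    (hs : HasTy s .base) (ht : HasTy t .base) (hst : ValidSeq A (equivTm s t))
    (hCs : ValidSeq A (C.fill s)) : ValidSeq A (C.fill t) := by
  intro I hI
  have hJ : ∀ J : Interp, (∀ p, ¬ C.captures p → J p.1 p.2 = I p.1 p.2) →
      ∀ σ, eval J s σ = eval J t σ := by
    intro J hJI σ
    by_cases hσ : σ = .base
    · subst hσ
      refine Bool.eq_iff_iff.2 ((satisfies_equivTm hs ht).1 (hst J fun u hu => ?_))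
      have hu' : eval J u .base = eval I u .base :=
        eval_congr_fv u (fun p hp => hJI p (hC p (Finset.mem_biUnion.2 ⟨u, hu, hp⟩))) _
      exact hu'.trans (hI u hu)
    · rw [hs.eval_of_ne J hσ, ht.eval_of_ne J hσ]
  exact (C.eval_fill_eq (hs.typeOf_eq.trans ht.typeOf_eq.symm) hJ .base).symm.trans (hCs I hI)

/-- Soundness: every deducible sequent is valid. -/
theorem soundness (A : Finset Tm) (s : Tm) (h : Ded A s) : ValidSeq A s := by
  induction h with
  | triv => exact fun I hI => hI _ (Finset.mem_insert_self _ _)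
  | weak _ _ ih => exact fun I hI => ih I fun u hu => hI u (Finset.mem_insert_of_mem hu)
  | ded hd ih =>
    obtain ⟨hA, ht⟩ := hd.hasTy
    have hs := hA _ (Finset.mem_insert_self _ _)
    exact fun I hI => (satisfies_impTm hs ht).2 fun hsI =>
      ih I ((Finset.forall_mem_insert _ _ _).2 ⟨hsI, hI⟩)
  | mp hd _ ih₁ ih₂ =>
    obtain ⟨hs, ht⟩ := hasTy_impTm_iff.1 hd.hasTy.2
    exact fun I hI => (satisfies_impTm hs ht).1 (ih₁ I hI) (ih₂ I hI)
  | dn hd ih =>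
    have hns := (hasTy_impTm_iff.1 hd.hasTy.2).1
    have hs := (hasTy_impTm_iff.1 hns).1
    exact fun I hI => not_not.1 <| (satisfies_negTm hs).not.1 <| (satisfies_negTm hns).1 (ih I hI)
  | lam _ hst _ ih => exact fun I hI => (hst.eval_eq I .base).symm.trans (ih I hI)
  | br C hC hd _ _ ih₁ ih₂ =>
    obtain ⟨hs, ht⟩ := hasTy_equivTm_iff.1 hd.hasTy.2
    exact ih₁.br hC hs ht ih₂

end PTT
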